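/- Under the PRP mediator and exposure-targeted utility, if c is an improvement cycle, then for every improvement step r and topic k such that the improving author deviates to topic k at step r, there exists another improvement step r' with deviation to topic k' such that D(k)/(W_k(c)+1) < D(k')/(W_{k'}(c)+1). -/
import Mathlib


open Finset

noncomputable section

/-- Highest quality of a document on topic `k` under profile `a`:
`B_k(a) = max_j Q_{j,k} · 1[a_j = k]` (with value `0` when the max is over an empty set). -/
def hiQ {n m : ℕ} (Q : Fin n → Fin m → ℝ) (k : Fin m) (a : Fin n → Fin m) : ℝ :=
  Finset.univ.fold max 0 (fun j => if a j = k then Q j k else 0)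

/-- Number of authors writing on topic `k` with the highest quality `B_k(a)`. -/
def numTop {n m : ℕ} (Q : Fin n → Fin m → ℝ) (k : Fin m) (a : Fin n → Fin m) : ℕ :=
  (Finset.univ.filter (fun j => a j = k ∧ Q j k = hiQ Q k a)).card

/-- The PRP mediator: first-rank probability of author `j` on topic `k` under profile `a`. -/
def prp {n m : ℕ} (Q : Fin n → Fin m → ℝ) (k : Fin m) (a : Fin n → Fin m) (j : Fin n) : ℝ :=
  if a j = k ∧ Q j k = hiQ Q k a then 1 / (numTop Q k a : ℝ) else 0

/-- Exposure-targeted utility under the PRP mediator. -/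
def uEx {n m : ℕ} (D : Fin m → ℝ) (Q : Fin n → Fin m → ℝ) (a : Fin n → Fin m) (j : Fin n) : ℝ :=
  D (a j) * prp Q (a j) a j

/-- Action-targeted utility under the PRP mediator. -/
def uAc {n m : ℕ} (D : Fin m → ℝ) (Q : Fin n → Fin m → ℝ) (a : Fin n → Fin m) (j : Fin n) : ℝ :=
  D (a j) * prp Q (a j) a j * Q j (a j)

/-- `b` is obtained from `a` by a unilateral deviation of author `p` strictly
increasing her utility (an improvement step). -/
def ImpStep {n m : ℕ} (u : (Fin n → Fin m) → Fin n → ℝ)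
    (a b : Fin n → Fin m) (p : Fin n) : Prop :=
  (∀ i, i ≠ p → b i = a i) ∧ b p ≠ a p ∧ u a p < u b p

/-- `γ` is an improvement path: each consecutive pair of profiles is an improvement step. -/
def IsImpPath {n m l : ℕ} (u : (Fin n → Fin m) → Fin n → ℝ)
    (γ : Fin (l + 1) → Fin n → Fin m) : Prop :=
  ∀ r : Fin l, ∃ p, ImpStep u (γ r.castSucc) (γ r.succ) p

/-- `W_k(γ)`: the minimum of `H_k` over all profiles in the finite path `γ`. -/
def minTop {n m l : ℕ} (Q : Fin n → Fin m → ℝ) (k : Fin m)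
    (γ : Fin (l + 1) → Fin n → Fin m) : ℕ :=
  Finset.univ.inf' Finset.univ_nonempty (fun r => numTop Q k (γ r))

/-- `S_k(γ)`: the maximum of `B_k` over all profiles in the finite path `γ`. -/
def maxQ {n m l : ℕ} (Q : Fin n → Fin m → ℝ) (k : Fin m)
    (γ : Fin (l + 1) → Fin n → Fin m) : ℝ :=
  Finset.univ.sup' Finset.univ_nonempty (fun r => hiQ Q k (γ r))

section helpers

variable {n m : ℕ} {D : Fin m → ℝ} {Q : Fin n → Fin m → ℝ} {a b : Fin n → Fin m}
  {p : Fin n} {k q : Fin m}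

lemma hiQ_nonneg : 0 ≤ hiQ Q k a :=
  (Finset.le_fold_max _).mpr (Or.inl le_rfl)

lemma le_hiQ (h : a p = k) : Q p k ≤ hiQ Q k a := by
  refine (Finset.le_fold_max _).mpr (Or.inr ⟨p, mem_univ _, ?_⟩)
  rw [if_pos h]

lemma hiQ_le {c : ℝ} (h0 : 0 ≤ c) (h : ∀ j, a j = k → Q j k ≤ c) : hiQ Q k a ≤ c := by
  refine (Finset.fold_max_le _).mpr ⟨h0, fun j _ => ?_⟩
  by_cases hj : a j = k
  · rw [if_pos hj]; exact h j hj
  · rw [if_neg hj]; exact h0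

lemma exists_top (hQ0 : ∀ j k, 0 ≤ Q j k) (h : ∃ j0, a j0 = k) :
    ∃ j, a j = k ∧ Q j k = hiQ Q k a := by
  obtain ⟨j0, hj0⟩ := h
  have hne : (univ.filter fun j => a j = k).Nonempty := ⟨j0, by simp [hj0]⟩
  obtain ⟨j, hj, hsup⟩ := Finset.exists_mem_eq_sup' hne (fun j => Q j k)
  simp only [mem_filter, mem_univ, true_and] at hj
  refine ⟨j, hj, ?_⟩
  rw [← hsup]
  apply le_antisymm
  · apply Finset.sup'_le
    intro i hi
    simp only [mem_filter, mem_univ, true_and] at hi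
    exact le_hiQ hi
  · apply hiQ_le
    · exact le_trans (hQ0 j0 k)
        (Finset.le_sup' (fun j => Q j k) (mem_filter.mpr ⟨mem_univ j0, hj0⟩))
    · intro i hi
      exact Finset.le_sup' (fun j => Q j k) (mem_filter.mpr ⟨mem_univ i, hi⟩)

lemma numTop_pos (hQ0 : ∀ j k, 0 ≤ Q j k) (h : a p = k) : 1 ≤ numTop Q k a := by
  obtain ⟨j, hj1, hj2⟩ := exists_top hQ0 ⟨p, h⟩
  exact Finset.card_pos.mpr ⟨j, mem_filter.mpr ⟨mem_univ _, hj1, hj2⟩⟩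

lemma hiQ_congr (h : ∀ j, a j = k ↔ b j = k) : hiQ Q k b = hiQ Q k a := by
  unfold hiQ
  apply Finset.fold_congr
  intro j _
  by_cases hj : a j = k
  · rw [if_pos ((h j).mp hj), if_pos hj]
  · rw [if_neg (fun hb => hj ((h j).mpr hb)), if_neg hj]

lemma numTop_congr (h : ∀ j, a j = k ↔ b j = k) : numTop Q k b = numTop Q k a := by
  unfold numTop
  congr 1
  apply Finset.filter_congr
  intro j _
  rw [hiQ_congr h]
  exact and_congr_left' (h j).symm

lemma uEx_nonneg (hD : ∀ k, 0 ≤ D k) (a : Fin n → Fin m) (p : Fin n) : 0 ≤ uEx D Q a p := by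
  unfold uEx prp
  split_ifs
  · exact mul_nonneg (hD _) (by positivity)
  · rw [mul_zero]

lemma anatomy (hD : ∀ k, 0 ≤ D k) (h : 0 < uEx D Q b p) :
    Q p (b p) = hiQ Q (b p) b ∧ 0 < D (b p) ∧ 1 ≤ numTop Q (b p) b ∧
      uEx D Q b p = D (b p) / (numTop Q (b p) b : ℝ) := by
  unfold uEx prp at h ⊢
  split_ifs at h ⊢ with hc
  · have hN : numTop Q (b p) b ≠ 0 := by
      intro h0
      rw [h0] at h; norm_num at h
    have hNpos : (0:ℝ) < (numTop Q (b p) b : ℝ) := by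
      exact_mod_cast Nat.pos_of_ne_zero hN
    have hD' : 0 < D (b p) := by
      by_contra hD0
      push_neg at hD0
      nlinarith [one_div_pos.mpr hNpos]
    exact ⟨hc.2, hD', Nat.one_le_iff_ne_zero.mpr hN, by rw [mul_one_div]⟩
  · rw [mul_zero] at h; exact absurd h (lt_irrefl 0)

lemma uEx_top (ha : a p = q) (htop : Q p q = hiQ Q q a) :
    uEx D Q a p = D q / (numTop Q q a : ℝ) := by
  unfold uEx prp
  rw [ha, if_pos ⟨rfl, htop⟩, mul_one_div]

end helpers

section steps

variable {n m : ℕ} {Q : Fin n → Fin m → ℝ} {a b : Fin n → Fin m} {p : Fin n} {q : Fin m}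

lemma hiQ_enter (hmv : ∀ j, j ≠ p → b j = a j) (hap : a p ≠ q) (hbp : b p = q) :
    hiQ Q q b = max (hiQ Q q a) (Q p q) := by
  apply le_antisymm
  · apply hiQ_le (le_max_of_le_left hiQ_nonneg)
    intro j hj
    by_cases hjp : j = p
    · subst hjp; exact le_max_right _ _
    · rw [hmv j hjp] at hj
      exact le_max_of_le_left (le_hiQ hj)
  · apply max_le
    · apply hiQ_le hiQ_nonneg
      intro j hj
      have hjp : j ≠ p := fun h => hap (h ▸ hj)
      exact le_hiQ (by rw [← hmv j hjp] at hj; exact hj)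
    · exact le_hiQ hbp

lemma step_cases (hQ0 : ∀ j k, 0 ≤ Q j k) (hmv : ∀ j, j ≠ p → b j = a j) (q : Fin m) :
    ((a p = q ↔ b p = q) ∧ hiQ Q q b = hiQ Q q a ∧ numTop Q q b = numTop Q q a) ∨
    (a p ≠ q ∧ b p = q ∧ Q p q < hiQ Q q a ∧ hiQ Q q b = hiQ Q q a ∧
      numTop Q q b = numTop Q q a) ∨
    (a p = q ∧ b p ≠ q ∧ Q p q ≠ hiQ Q q a ∧ hiQ Q q b = hiQ Q q a ∧
      numTop Q q b = numTop Q q a) ∨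
    (a p ≠ q ∧ b p = q ∧ Q p q = hiQ Q q a ∧ hiQ Q q b = hiQ Q q a ∧
      numTop Q q b = numTop Q q a + 1) ∨
    (a p ≠ q ∧ b p = q ∧ hiQ Q q a < Q p q ∧ hiQ Q q b = Q p q ∧ numTop Q q b = 1) ∨
    (a p = q ∧ b p ≠ q ∧ Q p q = hiQ Q q a ∧ 2 ≤ numTop Q q a ∧
      hiQ Q q b = hiQ Q q a ∧ numTop Q q b = numTop Q q a - 1) ∨
    (a p = q ∧ b p ≠ q ∧ Q p q = hiQ Q q a ∧ numTop Q q a = 1) := by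
  by_cases hap : a p = q <;> by_cases hbp : b p = q
  · -- both on q : a = b
    have hab : b = a := funext fun j => by
      by_cases hj : j = p
      · subst hj; rw [hap, hbp]
      · exact hmv j hj
    subst hab
    exact Or.inl ⟨Iff.rfl, rfl, rfl⟩
  · -- leave
    by_cases htop : Q p q = hiQ Q q a
    · -- top leave
      have h1 : 1 ≤ numTop Q q a := numTop_pos hQ0 hap
      rcases Nat.lt_or_ge (numTop Q q a) 2 with h2 | h2
      · exact Or.inr (Or.inr (Or.inr (Or.inr (Or.inr (Or.inr ⟨hap, hbp, htop, by omega⟩)))))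
      · -- big top leave
        obtain ⟨j0, hj0mem, hj0ne⟩ := Finset.exists_mem_ne (s := univ.filter (fun j => a j = q ∧ Q j q = hiQ Q q a)) (by unfold numTop at h2; omega) p
        simp only [mem_filter, mem_univ, true_and] at hj0mem
        have hbj0 : b j0 = q := by rw [hmv j0 hj0ne]; exact hj0mem.1
        have hBle : hiQ Q q b ≤ hiQ Q q a := by
          apply hiQ_le hiQ_nonneg
          intro j hj
          have hjp : j ≠ p := fun h => hbp (h ▸ hj)
          rw [hmv j hjp] at hj
          exact le_hiQ hj
        have hB : hiQ Q q b = hiQ Q q a :=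
          le_antisymm hBle (hj0mem.2 ▸ le_hiQ hbj0)
        have hset : (univ.filter (fun j => b j = q ∧ Q j q = hiQ Q q b)) =
            (univ.filter (fun j => a j = q ∧ Q j q = hiQ Q q a)).erase p := by
          ext j
          simp only [mem_filter, mem_univ, true_and, mem_erase]
          constructor
          · rintro ⟨hjq, hjQ⟩
            have hjp : j ≠ p := fun h => hbp (h ▸ hjq)
            rw [hmv j hjp] at hjq
            exact ⟨hjp, hjq, hB ▸ hjQ⟩
          · rintro ⟨hjp, hjq, hjQ⟩
            rw [← hmv j hjp] at hjq
            exact ⟨hjq, hB ▸ hjQ⟩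
        have hcard : numTop Q q b = numTop Q q a - 1 := by
          unfold numTop
          rw [hset, Finset.card_erase_of_mem (mem_filter.mpr ⟨mem_univ _, hap, htop⟩)]
        exact Or.inr (Or.inr (Or.inr (Or.inr (Or.inr (Or.inl
          ⟨hap, hbp, htop, h2, hB, hcard⟩)))))
    · -- nontop leave
      obtain ⟨j0, hj0q, hj0Q⟩ := exists_top hQ0 ⟨p, hap⟩
      have hj0ne : j0 ≠ p := fun h => htop (h ▸ hj0Q)
      have hbj0 : b j0 = q := by rw [hmv j0 hj0ne]; exact hj0q
      have hBle : hiQ Q q b ≤ hiQ Q q a := by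
        apply hiQ_le hiQ_nonneg
        intro j hj
        have hjp : j ≠ p := fun h => hbp (h ▸ hj)
        rw [hmv j hjp] at hj
        exact le_hiQ hj
      have hB : hiQ Q q b = hiQ Q q a := le_antisymm hBle (hj0Q ▸ le_hiQ hbj0)
      have hset : (univ.filter (fun j => b j = q ∧ Q j q = hiQ Q q b)) =
          (univ.filter (fun j => a j = q ∧ Q j q = hiQ Q q a)) := by
        ext j
        simp only [mem_filter, mem_univ, true_and]
        constructor
        · rintro ⟨hjq, hjQ⟩
          have hjp : j ≠ p := fun h => hbp (h ▸ hjq)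
          rw [hmv j hjp] at hjq
          exact ⟨hjq, hB ▸ hjQ⟩
        · rintro ⟨hjq, hjQ⟩
          by_cases hjp : j = p
          · exact absurd (hjp ▸ hjQ) htop
          · rw [← hmv j hjp] at hjq
            exact ⟨hjq, hB ▸ hjQ⟩
      exact Or.inr (Or.inr (Or.inl ⟨hap, hbp, htop, hB, by unfold numTop; rw [hset]⟩))
  · -- enter
    have hBmax : hiQ Q q b = max (hiQ Q q a) (Q p q) := hiQ_enter hmv hap hbp
    rcases lt_trichotomy (Q p q) (hiQ Q q a) with hlt | heq | hgt
    · -- nontop enter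
      have hB : hiQ Q q b = hiQ Q q a := by rw [hBmax, max_eq_left hlt.le]
      have hset : (univ.filter (fun j => b j = q ∧ Q j q = hiQ Q q b)) =
          (univ.filter (fun j => a j = q ∧ Q j q = hiQ Q q a)) := by
        ext j
        simp only [mem_filter, mem_univ, true_and]
        constructor
        · rintro ⟨hjq, hjQ⟩
          by_cases hjp : j = p
          · subst hjp; rw [hB] at hjQ; exact absurd hjQ hlt.ne
          · rw [hmv j hjp] at hjq
            exact ⟨hjq, hB ▸ hjQ⟩
        · rintro ⟨hjq, hjQ⟩
          have hjp : j ≠ p := fun h => hap (h ▸ hjq)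
          rw [← hmv j hjp] at hjq
          exact ⟨hjq, hB ▸ hjQ⟩
      exact Or.inr (Or.inl ⟨hap, hbp, hlt, hB, by unfold numTop; rw [hset]⟩)
    · -- tie enter
      have hB : hiQ Q q b = hiQ Q q a := by rw [hBmax, heq, max_self]
      have hset : (univ.filter (fun j => b j = q ∧ Q j q = hiQ Q q b)) =
          insert p (univ.filter (fun j => a j = q ∧ Q j q = hiQ Q q a)) := by
        ext j
        simp only [mem_filter, mem_univ, true_and, mem_insert]
        constructor
        · rintro ⟨hjq, hjQ⟩
          by_cases hjp : j = p
          · exact Or.inl hjp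
          · rw [hmv j hjp] at hjq
            exact Or.inr ⟨hjq, hB ▸ hjQ⟩
        · rintro (hjp | ⟨hjq, hjQ⟩)
          · subst hjp; exact ⟨hbp, hB ▸ heq⟩
          · have hjp : j ≠ p := fun h => hap (h ▸ hjq)
            rw [← hmv j hjp] at hjq
            exact ⟨hjq, hB ▸ hjQ⟩
      have hcard : numTop Q q b = numTop Q q a + 1 := by
        unfold numTop
        rw [hset, Finset.card_insert_of_notMem (fun hmem => hap (mem_filter.mp hmem).2.1)]
      exact Or.inr (Or.inr (Or.inr (Or.inl ⟨hap, hbp, heq, hB, hcard⟩)))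
    · -- beat enter
      have hB : hiQ Q q b = Q p q := by rw [hBmax, max_eq_right hgt.le]
      have hset : (univ.filter (fun j => b j = q ∧ Q j q = hiQ Q q b)) = {p} := by
        ext j
        simp only [mem_filter, mem_univ, true_and, mem_singleton]
        constructor
        · rintro ⟨hjq, hjQ⟩
          by_contra hjp
          rw [hmv j hjp] at hjq
          have := le_hiQ (Q := Q) hjq
          rw [hB] at hjQ
          exact absurd (hjQ ▸ this) (not_le.mpr hgt)
        · rintro hjp
          subst hjp
          exact ⟨hbp, hB.symm⟩
      exact Or.inr (Or.inr (Or.inr (Or.inr (Or.inl ⟨hap, hbp, hgt, hB, by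
        unfold numTop; rw [hset, Finset.card_singleton]⟩))))
  · -- untouched
    have hiff : ∀ j, a j = q ↔ b j = q := by
      intro j
      by_cases hjp : j = p
      · subst hjp; exact iff_of_false hap hbp
      · rw [hmv j hjp]
    exact Or.inl ⟨hiff p, hiQ_congr hiff, numTop_congr hiff⟩

end steps

section dynamics

variable {n m : ℕ} {Q : Fin n → Fin m → ℝ} {q : Fin m} {l : ℕ}

lemma const_hiQ (hQ0 : ∀ j k, 0 ≤ Q j k) (hl : 0 < l) (g : ℕ → Fin n → Fin m)
    (hmv : ∀ i, ∃ p, ∀ j, j ≠ p → g (i+1) j = g i j)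
    (hper : ∀ i, g (i + l) = g i)
    (hno : ∀ i p, (∀ j, j ≠ p → g (i+1) j = g i j) → g i p = q → g (i+1) p ≠ q →
      Q p q = hiQ Q q (g i) → numTop Q q (g i) ≠ 1) :
    ∀ i j, hiQ Q q (g i) = hiQ Q q (g j) := by
  have hmono : ∀ i, hiQ Q q (g i) ≤ hiQ Q q (g (i+1)) := by
    intro i
    obtain ⟨p, hp⟩ := hmv i
    rcases step_cases hQ0 hp q with hc | hc | hc | hc | hc | hc | hc
    · exact hc.2.1.ge
    · exact hc.2.2.2.1.ge
    · exact hc.2.2.2.1.ge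
    · exact hc.2.2.2.1.ge
    · exact le_of_lt (hc.2.2.2.1 ▸ hc.2.2.1)
    · exact hc.2.2.2.2.1.ge
    · exact absurd hc.2.2.2 (hno i p hp hc.1 hc.2.1 hc.2.2.1)
  have hmono' : ∀ i d, hiQ Q q (g i) ≤ hiQ Q q (g (i + d)) := by
    intro i d
    induction d with
    | zero => rfl
    | succ d ih => exact le_trans ih (by rw [show i + (d+1) = (i+d) + 1 by ring]; exact hmono (i+d))
  have hmul : ∀ i c, hiQ Q q (g (i + c * l)) = hiQ Q q (g i) := by
    intro i c
    induction c with
    | zero => norm_num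
    | succ c ih => rw [show i + (c+1) * l = (i + c * l) + l by ring, hper, ih]
  have key : ∀ i j : ℕ, hiQ Q q (g i) ≤ hiQ Q q (g j) := by
    intro i j
    have h1 : i ≤ j + i * l := by
      have := Nat.le_mul_of_pos_right i hl
      omega
    have h2 := hmono' i (j + i * l - i)
    rw [show i + (j + i * l - i) = j + i * l by omega] at h2
    rwa [hmul j i] at h2
  exact fun i j => le_antisymm (key i j) (key j i)

lemma lemA (hQ0 : ∀ j k, 0 ≤ Q j k) (hl : 0 < l) (g : ℕ → Fin n → Fin m)
    (hmv : ∀ i, ∃ p, ∀ j, j ≠ p → g (i+1) j = g i j)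
    (hper : ∀ i, g (i + l) = g i)
    (W : ℕ) (hW : ∀ i, W ≤ numTop Q q (g i))
    (hWex : ∀ N, ∃ i, N ≤ i ∧ numTop Q q (g i) = W)
    (i0 : ℕ) (p0 : Fin n) (hp0 : g i0 p0 ≠ q) (hp0' : g (i0+1) p0 = q)
    (htop0 : Q p0 q = hiQ Q q (g (i0+1))) :
    ∃ i p, (∀ j, j ≠ p → g (i+1) j = g i j) ∧ g i p = q ∧ g (i+1) p ≠ q ∧
      Q p q = hiQ Q q (g i) ∧ numTop Q q (g i) ≤ W + 1 := by
  by_contra hcon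
  push_neg at hcon
  have hno : ∀ i p, (∀ j, j ≠ p → g (i+1) j = g i j) → g i p = q → g (i+1) p ≠ q →
      Q p q = hiQ Q q (g i) → numTop Q q (g i) ≠ 1 := by
    intro i p h1 h2 h3 h4
    have := hcon i p h1 h2 h3 h4
    omega
  have hconst := const_hiQ hQ0 hl g hmv hper hno
  -- identify mover at i0
  obtain ⟨pm, hpm⟩ := hmv i0
  have hp0m : p0 = pm := by
    by_contra hne
    exact hp0 ((hpm p0 hne) ▸ hp0')
  subst hp0m
  have htop0' : Q p0 q = hiQ Q q (g i0) := htop0.trans (hconst (i0+1) i0)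
  have htie : numTop Q q (g (i0+1)) = numTop Q q (g i0) + 1 := by
    rcases step_cases hQ0 hpm q with hc | hc | hc | hc | hc | hc | hc
    · exact absurd ((hc.1).mpr hp0') hp0
    · exact absurd htop0' hc.2.2.1.ne
    · exact absurd hc.1 hp0
    · exact hc.2.2.2.2
    · exact absurd htop0' hc.2.2.1.ne'
    · exact absurd hc.1 hp0
    · exact absurd hc.1 hp0
  have hinv : ∀ d, W + 1 ≤ numTop Q q (g (i0 + 1 + d)) := by
    intro d
    induction d with
    | zero => rw [Nat.add_zero, htie]; exact Nat.succ_le_succ (hW i0)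
    | succ d ih =>
      have hidx : i0 + 1 + (d + 1) = (i0 + 1 + d) + 1 := by ring
      rw [hidx]
      set i := i0 + 1 + d with hi
      obtain ⟨pm2, hpm2⟩ := hmv i
      rcases step_cases hQ0 hpm2 q with hc | hc | hc | hc | hc | hc | hc
      · rw [hc.2.2]; exact ih
      · rw [hc.2.2.2.2]; exact ih
      · rw [hc.2.2.2.2]; exact ih
      · rw [hc.2.2.2.2]; omega
      · exfalso
        have := hconst (i+1) i
        rw [hc.2.2.2.1] at this
        exact hc.2.2.1.ne' this
      · have hbig := hcon i pm2 hpm2 hc.1 hc.2.1 hc.2.2.1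
        rw [hc.2.2.2.2.2]
        omega
      · exact absurd hc.2.2.2 (hno i pm2 hpm2 hc.1 hc.2.1 hc.2.2.1)
  obtain ⟨i, hiN, hieq⟩ := hWex (i0 + 1)
  have := hinv (i - (i0 + 1))
  rw [show i0 + 1 + (i - (i0+1)) = i by omega, hieq] at this
  omega

lemma lemB (hQ0 : ∀ j k, 0 ≤ Q j k) (hl : 0 < l) (g : ℕ → Fin n → Fin m)
    (hmv : ∀ i, ∃ p, ∀ j, j ≠ p → g (i+1) j = g i j)
    (hper : ∀ i, g (i + l) = g i)
    (W : ℕ) (hW : ∀ i, W ≤ numTop Q q (g i))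
    (i0 : ℕ) (p0 : Fin n) (hp0 : g i0 p0 ≠ q) (hp0' : g (i0+1) p0 = q)
    (htop0 : Q p0 q = hiQ Q q (g (i0+1)))
    (hpost : numTop Q q (g (i0+1)) = W) :
    ∃ i p, (∀ j, j ≠ p → g (i+1) j = g i j) ∧ g i p = q ∧ g (i+1) p ≠ q ∧
      Q p q = hiQ Q q (g i) ∧ numTop Q q (g i) = 1 := by
  by_contra hcon
  push_neg at hcon
  have hno : ∀ i p, (∀ j, j ≠ p → g (i+1) j = g i j) → g i p = q → g (i+1) p ≠ q →
      Q p q = hiQ Q q (g i) → numTop Q q (g i) ≠ 1 :=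
    fun i p h1 h2 h3 h4 => hcon i p h1 h2 h3 h4
  have hconst := const_hiQ hQ0 hl g hmv hper hno
  obtain ⟨pm, hpm⟩ := hmv i0
  have hp0m : p0 = pm := by
    by_contra hne
    exact hp0 ((hpm p0 hne) ▸ hp0')
  subst hp0m
  have htop0' : Q p0 q = hiQ Q q (g i0) := htop0.trans (hconst (i0+1) i0)
  have htie : numTop Q q (g (i0+1)) = numTop Q q (g i0) + 1 := by
    rcases step_cases hQ0 hpm q with hc | hc | hc | hc | hc | hc | hc
    · exact absurd ((hc.1).mpr hp0') hp0
    · exact absurd htop0' hc.2.2.1.ne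
    · exact absurd hc.1 hp0
    · exact hc.2.2.2.2
    · exact absurd htop0' hc.2.2.1.ne'
    · exact absurd hc.1 hp0
    · exact absurd hc.1 hp0
  have := hW i0
  omega

end dynamics


/-- In an improvement cycle `c` under PRP/exposure-targeted utility, for every step `r`
where the improving author deviates to topic `k`, there is a step `r'` with deviation
to some topic `k'` such that `D(k)/(W_k(c)+1) < D(k')/(W_{k'}(c)+1)`. -/
theorem stmt3 {n m l : ℕ} (D : Fin m → ℝ) (Q : Fin n → Fin m → ℝ)
    (hD : ∀ k, 0 ≤ D k) (hDsum : ∑ k, D k = 1)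
    (hQ : ∀ j k, Q j k ∈ Set.Icc (0:ℝ) 1)
    (hsort : ∀ k k' : Fin m, k ≤ k' → D k' ≤ D k)
    (γ : Fin (l + 1) → Fin n → Fin m) (hγ : IsImpPath (uEx D Q) γ)
    (hcyc : γ (Fin.last l) = γ 0)
    (r : Fin l) (p : Fin n) (k : Fin m)
    (hstep : ImpStep (uEx D Q) (γ r.castSucc) (γ r.succ) p)
    (hk : γ r.succ p = k) :
    ∃ (r' : Fin l) (p' : Fin n) (k' : Fin m),
      ImpStep (uEx D Q) (γ r'.castSucc) (γ r'.succ) p' ∧ γ r'.succ p' = k' ∧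
      D k / (minTop Q k γ + 1) < D k' / (minTop Q k' γ + 1) := by
    classical
  have hl : 0 < l := r.pos
  have hQ0 : ∀ j k, 0 ≤ Q j k := fun j k => (hQ j k).1
  -- periodic unfolding of the cycle
  let st : ℕ → Fin l := fun i => ⟨i % l, Nat.mod_lt _ hl⟩
  let g : ℕ → Fin n → Fin m := fun i => γ (st i).castSucc
  have hst2 : ∀ i, γ (st i).succ = g (i + 1) := by
    intro i
    have hmod : (i + 1) % l = (i % l + 1) % l := by rw [Nat.mod_add_mod]
    by_cases hc : i % l + 1 < l
    · refine congrArg γ (Fin.ext ?_)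
      rw [Fin.val_succ, Fin.coe_castSucc]
      show i % l + 1 = (i + 1) % l
      rw [hmod, Nat.mod_eq_of_lt hc]
    · have hEq : i % l + 1 = l := by
        have := Nat.mod_lt i hl
        omega
      have h1 : (st i).succ = Fin.last l := Fin.ext (by rw [Fin.val_succ]; exact hEq)
      have h2 : (st (i + 1)).castSucc = (0 : Fin (l + 1)) := Fin.ext (by
        rw [Fin.coe_castSucc]
        show (i + 1) % l = 0
        rw [hmod, hEq, Nat.mod_self])
      show γ (st i).succ = γ (st (i + 1)).castSucc
      rw [h1, h2, hcyc]
  have hper : ∀ i, g (i + l) = g i := fun i =>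
    congrArg γ (congrArg Fin.castSucc (Fin.ext (Nat.add_mod_right i l)))
  have hg_step : ∀ i, ∃ p', ImpStep (uEx D Q) (g i) (g (i + 1)) p' := by
    intro i
    obtain ⟨p', hp'⟩ := hγ (st i)
    rw [hst2 i] at hp'
    exact ⟨p', hp'⟩
  let mv : ℕ → Fin n := fun i => (hg_step i).choose
  have hmv : ∀ i, ImpStep (uEx D Q) (g i) (g (i + 1)) (mv i) := fun i => (hg_step i).choose_spec
  have hmv' : ∀ i, ∃ p', ∀ j, j ≠ p' → g (i + 1) j = g i j := fun i => ⟨mv i, (hmv i).1⟩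
  have hmv_per : ∀ i, mv (i + l) = mv i := by
    intro i
    have h1 := hmv (i + l)
    rw [hper i, show i + l + 1 = (i + 1) + l by ring, hper (i + 1)] at h1
    by_contra hne
    exact (hmv i).2.1 (h1.1 (mv i) (fun h => hne h.symm))
  let Uf : ℕ → ℝ := fun i => uEx D Q (g (i + 1)) (mv i)
  have hUfdef : ∀ i, Uf i = uEx D Q (g (i + 1)) (mv i) := fun _ => rfl
  have hUf_per : ∀ i, Uf (i + l) = Uf i := by
    intro i
    rw [hUfdef, hUfdef, hmv_per, show i + l + 1 = (i + 1) + l by ring, hper (i + 1)]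
  have hUf_mul : ∀ c i, Uf (i + c * l) = Uf i := by
    intro c
    induction c with
    | zero => intro i; norm_num
    | succ c ih =>
      intro i
      rw [show i + (c + 1) * l = (i + c * l) + l by ring, hUf_per, ih]
  have hUf_mod : ∀ i, Uf (i % l) = Uf i := by
    intro i
    calc Uf (i % l) = Uf (i % l + (i / l) * l) := (hUf_mul _ _).symm
    _ = Uf i := by rw [mul_comm, Nat.mod_add_div]
  -- minTop facts
  have hWle : ∀ (q : Fin m) (i : ℕ), minTop Q q γ ≤ numTop Q q (g i) := by
    intro q i
    exact Finset.inf'_le (fun s => numTop Q q (γ s)) (mem_univ (st i).castSucc)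
  have hWex : ∀ (q : Fin m) (N : ℕ), ∃ i, N ≤ i ∧ numTop Q q (g i) = minTop Q q γ := by
    intro q N
    obtain ⟨s, -, hs⟩ := Finset.exists_mem_eq_inf' (Finset.univ_nonempty) (fun s => numTop Q q (γ s))
    have hNl : N + 1 ≤ (N + 1) * l := Nat.le_mul_of_pos_right _ hl
    by_cases hsl : (s : ℕ) < l
    · refine ⟨(s : ℕ) + (N + 1) * l, by omega, ?_⟩
      have hmod : ((s : ℕ) + (N + 1) * l) % l = (s : ℕ) := by
        rw [Nat.add_mul_mod_self_right, Nat.mod_eq_of_lt hsl]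
      have : (st ((s : ℕ) + (N + 1) * l)).castSucc = s := Fin.ext (by
        rw [Fin.coe_castSucc]; exact hmod)
      show numTop Q q (γ (st _).castSucc) = _
      rw [this]
      exact hs.symm
    · have hse : s = Fin.last l := Fin.ext (by have := s.isLt; simp only [Fin.val_last]; omega)
      refine ⟨(N + 1) * l, by omega, ?_⟩
      have hmod : ((N + 1) * l) % l = 0 := Nat.mul_mod_left _ _
      have : (st ((N + 1) * l)).castSucc = (0 : Fin (l + 1)) := Fin.ext (by
        rw [Fin.coe_castSucc]; exact hmod)
      show numTop Q q (γ (st _).castSucc) = _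
      rw [this, ← hcyc, ← hse]
      exact hs.symm
  -- initial improvement-step facts
  have h0 : 0 < uEx D Q (γ r.succ) p := lt_of_le_of_lt (uEx_nonneg hD _ _) hstep.2.2
  have hana := anatomy hD h0
  rw [hk] at hana
  obtain ⟨htopk, hDk, -, -⟩ := hana
  have hv0 : 0 < D k / ((minTop Q k γ : ℝ) + 1) := div_pos hDk (by positivity)
  -- the entry step at index r
  have hgr : g (r : ℕ) = γ r.castSucc :=
    congrArg γ (congrArg Fin.castSucc (Fin.ext (Nat.mod_eq_of_lt r.isLt)))
  have hgr1 : g ((r : ℕ) + 1) = γ r.succ := by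
    rw [← hst2]
    exact congrArg γ (congrArg Fin.succ (Fin.ext (Nat.mod_eq_of_lt r.isLt)))
  have hAp : g (r : ℕ) p ≠ k := by
    rw [hgr]
    intro h
    exact hstep.2.1 (hk.trans h.symm)
  have hAp' : g ((r : ℕ) + 1) p = k := by rw [hgr1]; exact hk
  have hAtop : Q p k = hiQ Q k (g ((r : ℕ) + 1)) := by rw [hgr1]; exact htopk
  -- Claim C : a top author leaves `k` from a small stack
  obtain ⟨j0, p0, hp0mv, hp0q, hp0nq, hp0top, hp0cnt⟩ :=
    lemA (q := k) hQ0 hl g hmv' hper (minTop Q k γ) (hWle k) (hWex k) (r : ℕ) p hAp hAp' hAtop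
  have hp0m : p0 = mv j0 := by
    by_contra hne
    exact hp0nq (((hmv j0).1 p0 hne).trans hp0q)
  have hpre : D k / ((minTop Q k γ : ℝ) + 1) ≤ uEx D Q (g j0) p0 := by
    rw [uEx_top hp0q hp0top]
    have h1 : (0 : ℝ) < (numTop Q k (g j0) : ℝ) := by
      exact_mod_cast numTop_pos hQ0 hp0q
    have h2 : (numTop Q k (g j0) : ℝ) ≤ (minTop Q k γ : ℝ) + 1 := by
      exact_mod_cast hp0cnt
    exact div_le_div_of_nonneg_left hDk.le h1 h2
  have hstart : D k / ((minTop Q k γ : ℝ) + 1) < Uf j0 := by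
    refine lt_of_le_of_lt hpre ?_
    rw [hUfdef j0, hp0m]
    exact (hmv j0).2.2
  -- the recursion
  let S : ℕ → Finset (Fin l) := fun i => univ.filter (fun t : Fin l => Uf i < Uf (t : ℕ))
  have R : ∀ c i, (S i).card < c → D k / ((minTop Q k γ : ℝ) + 1) < Uf i →
      ∃ (r' : Fin l) (p' : Fin n) (k' : Fin m),
        ImpStep (uEx D Q) (γ r'.castSucc) (γ r'.succ) p' ∧ γ r'.succ p' = k' ∧
        D k / (minTop Q k γ + 1) < D k' / (minTop Q k' γ + 1) := by
    intro c
    induction c with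
    | zero => intro i hc _; exact absurd hc (Nat.not_lt_zero _)
    | succ c IH =>
      intro i hcard hUi
      have h0i : 0 < uEx D Q (g (i + 1)) (mv i) := lt_trans hv0 hUi
      obtain ⟨htopi, hDqi, hN1, hUeq⟩ := anatomy hD h0i
      by_cases hbig : minTop Q (g (i + 1) (mv i)) γ + 1 ≤ numTop Q (g (i + 1) (mv i)) (g (i + 1))
      · refine ⟨st i, mv i, g (i + 1) (mv i), ?_, ?_, ?_⟩
        · have h := hmv i
          rwa [← hst2 i] at h
        · rw [hst2 i]
        · refine lt_of_lt_of_le hUi ?_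
          rw [hUfdef i, hUeq]
          have h1 : (0 : ℝ) < ((minTop Q (g (i + 1) (mv i)) γ : ℝ) + 1) := by positivity
          have h2 : ((minTop Q (g (i + 1) (mv i)) γ : ℝ) + 1) ≤
              (numTop Q (g (i + 1) (mv i)) (g (i + 1)) : ℝ) := by exact_mod_cast hbig
          exact div_le_div_of_nonneg_left hDqi.le h1 h2
      · push_neg at hbig
        have hN1W : numTop Q (g (i + 1) (mv i)) (g (i + 1)) = minTop Q (g (i + 1) (mv i)) γ :=
          le_antisymm (by omega) (hWle _ (i + 1))
        have hApi : g i (mv i) ≠ g (i + 1) (mv i) := fun h => (hmv i).2.1 h.symm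
        obtain ⟨j2, p2, hmv2, hq2, hnq2, htop2, hcnt2⟩ :=
          lemB (q := g (i + 1) (mv i)) hQ0 hl g hmv' hper
            (minTop Q (g (i + 1) (mv i)) γ) (hWle _) i (mv i) hApi rfl htopi hN1W
        have hp2m : p2 = mv j2 := by
          by_contra hne
          exact hnq2 (((hmv j2).1 p2 hne).trans hq2)
        have hWq1 : minTop Q (g (i + 1) (mv i)) γ = 1 := by
          have h1 := hWle (g (i + 1) (mv i)) j2
          omega
        have hpre2 : uEx D Q (g j2) p2 = D (g (i + 1) (mv i)) := by
          rw [uEx_top hq2 htop2, hcnt2]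
          norm_num
        have hUfi_eq : Uf i = D (g (i + 1) (mv i)) := by
          rw [hUfdef i, hUeq, hN1W, hWq1]
          norm_num
        have hUj2 : Uf i < Uf j2 := by
          have himp := (hmv j2).2.2
          rw [← hp2m] at himp
          rw [hUfdef j2, ← hp2m, hUfi_eq, ← hpre2]
          exact himp
        have hsub : S j2 ⊂ S i := by
          rw [Finset.ssubset_def]
          constructor
          · intro t ht
            simp only [S, mem_filter, mem_univ, true_and] at ht ⊢
            exact lt_trans hUj2 ht
          · intro hsup
            have h1 : st j2 ∈ S i := by
              simp only [S, mem_filter, mem_univ, true_and]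
              show Uf i < Uf ((st j2 : Fin l) : ℕ)
              have : ((st j2 : Fin l) : ℕ) = j2 % l := rfl
              rw [this, hUf_mod]
              exact hUj2
            have h2 := hsup h1
            simp only [S, mem_filter, mem_univ, true_and] at h2
            rw [hUf_mod] at h2
            exact lt_irrefl _ h2
        have hlt := Finset.card_lt_card hsub
        exact IH j2 (by omega) (lt_trans hUi hUj2)
  exact R ((S j0).card + 1) j0 (Nat.lt_succ_self _) hstart
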